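/- Let ω ∈ (0,2] and k ∈ ℕ, k ≥ 1, and set δ := k^{−ω}. Define I(ω,k) := ∫₀^δ [ ∫_r^∞ e^{−k s^{1/ω}} s^{1/ω − 2} ds ]² r dr. Then there is a constant c > 0, depending only on ω, such that I(ω,k) ≤ c/k². -/

import Mathlib

open MeasureTheory Set Filter Complex Polynomial Asymptotics

noncomputable section

/-- `Γ ⊆ ℂ` is a Jordan curve: the image of a continuous periodic parametrization
which is injective on a period. -/
def IsJordanCurve (Γ : Set ℂ) : Prop :=
  ∃ φ : ℝ → ℂ, Continuous φ ∧ Function.Periodic φ 1 ∧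
    Set.InjOn φ (Set.Ico (0 : ℝ) 1) ∧ φ '' Set.Ico (0 : ℝ) 1 = Γ

/-- `Γ` is a rectifiable Jordan curve: a Jordan curve with a parametrization of
finite total variation. -/
def IsRectifiableJordanCurve (Γ : Set ℂ) : Prop :=
  ∃ φ : ℝ → ℂ, Continuous φ ∧ Function.Periodic φ 1 ∧
    Set.InjOn φ (Set.Ico (0 : ℝ) 1) ∧ φ '' Set.Ico (0 : ℝ) 1 = Γ ∧
    eVariationOn φ (Set.Icc (0 : ℝ) 1) ≠ ⊤

/-- `Γ` is a quasiconformal curve: it is a Jordan curve and there is a constant `M`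
such that any two points `z, ζ ∈ Γ` are joined by a subarc of `Γ` of diameter at
most `M * |z - ζ|`. -/
def IsQuasiconformalCurve (Γ : Set ℂ) : Prop :=
  IsJordanCurve Γ ∧
  ∃ M : ℝ, ∀ z ζ : ℂ, z ∈ Γ → ζ ∈ Γ →
    ∃ A : Set ℂ, IsConnected A ∧ A ⊆ Γ ∧ z ∈ A ∧ ζ ∈ A ∧
      Metric.diam A ≤ M * ‖z - ζ‖

/-- `Γ` is a piecewise analytic Jordan curve without cusps: it admits a periodic
parametrization `φ` which, on each of finitely many parameter subintervals, extends
to a real-analytic map with nonvanishing derivative (analytic arcs), and at each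
corner the two one-sided tangent vectors are not opposite, i.e. the exterior angles
are `ω·π` with `0 < ω < 2` (no cusps). -/
def IsPiecewiseAnalyticWithoutCusps (Γ : Set ℂ) : Prop :=
  ∃ (N : ℕ) (t : ℕ → ℝ) (φ : ℝ → ℂ),
    0 < N ∧ StrictMono t ∧ t 0 = 0 ∧
    Function.Periodic φ (t N) ∧ Continuous φ ∧
    Set.InjOn φ (Set.Ico 0 (t N)) ∧ φ '' Set.Ico 0 (t N) = Γ ∧
    (∀ j < N, ∃ g : ℝ → ℂ,
      Set.EqOn g φ (Set.Icc (t j) (t (j + 1))) ∧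
      AnalyticOnNhd ℝ g (Set.Icc (t j) (t (j + 1))) ∧
      ∀ s ∈ Set.Icc (t j) (t (j + 1)), deriv g s ≠ 0) ∧
    (∀ j : ℕ, 1 ≤ j → j ≤ N →
      ¬ ∃ c : ℝ, c < 0 ∧
        derivWithin φ (Set.Ici (t j)) (t j) =
          (c : ℂ) * derivWithin φ (Set.Iic (t j)) (t j))

/-- The Wirtinger derivative `∂f/∂z` of `f : ℂ → ℂ`, viewed as a real-differentiable map. -/
def wderivZ (f : ℂ → ℂ) (z : ℂ) : ℂ :=
  (fderiv ℝ f z (1 : ℂ) - Complex.I * fderiv ℝ f z Complex.I) / 2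

/-- The Wirtinger derivative `∂f/∂z̄` of `f : ℂ → ℂ`. -/
def wderivZbar (f : ℂ → ℂ) (z : ℂ) : ℂ :=
  (fderiv ℝ f z (1 : ℂ) + Complex.I * fderiv ℝ f z Complex.I) / 2

/-- `k ∈ [0,1)` is a reflection factor of the curve `Γ = frontier G`: the curve
admits a `K`-quasiconformal reflection `y` with `k = (K-1)/(K+1)`, i.e. a
sense-reversing involution of `ℂ̄` fixing `Γ` pointwise and interchanging `G`
and the exterior domain (the point `a ∈ G` corresponding to `∞`), whose complex
dilatation satisfies `|y_z| ≤ k·|y_z̄|` almost everywhere. -/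
def IsReflectionFactor (G : Set ℂ) (k : ℝ) : Prop :=
  0 ≤ k ∧ k < 1 ∧
  ∃ (y : ℂ → ℂ) (a : ℂ), a ∈ G ∧
    ContinuousOn y {a}ᶜ ∧
    (∀ z : ℂ, z ∉ frontier G → z ≠ a → DifferentiableAt ℝ y z) ∧
    (∀ z ∈ frontier G, y z = z) ∧
    (∀ z : ℂ, z ≠ a → y (y z) = z) ∧
    y '' (G \ {a}) = (closure G)ᶜ ∧
    y '' ((closure G)ᶜ) = G \ {a} ∧
    (∀ᵐ z : ℂ, ‖wderivZ y z‖ ≤ k * ‖wderivZbar y z‖) ∧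
    (∀ᵐ z : ℂ, wderivZbar y z ≠ 0)

/-- A bounded simply connected Jordan domain `G ⊆ ℂ`. -/
structure DomainSetup where
  G : Set ℂ
  isOpen : IsOpen G
  nonempty : G.Nonempty
  bounded : Bornology.IsBounded G
  connected : IsConnected G
  simplyConnected : SimplyConnectedSpace G
  jordan : IsJordanCurve (frontier G)

/-- A Jordan domain together with the exterior conformal map
`Φ : Ω = (closure G)ᶜ → Δ = {w : |w| > 1}`, normalized so that
`Φ(z) = γ z + γ₀ + O(1/z)` near infinity with `γ > 0`. -/
structure ExtSetup extends DomainSetup where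
  Φ : ℂ → ℂ
  γ : ℝ
  γ₀ : ℂ
  γ_pos : 0 < γ
  Φ_diff : DifferentiableOn ℂ Φ (closure G)ᶜ
  Φ_injOn : Set.InjOn Φ (closure G)ᶜ
  Φ_image : Φ '' (closure G)ᶜ = {w : ℂ | 1 < ‖w‖}
  Φ_normal : Filter.Tendsto (fun z : ℂ => Φ z - ((γ : ℂ) * z + γ₀))
    (Filter.cocompact ℂ) (nhds 0)

/-- The Bergman orthonormal polynomials of `G`: `p n` is a polynomial of degree `n`
with positive leading coefficient `lam n`, and the family is orthonormal with
respect to the inner product `⟪f, g⟫ = ∫_G f · conj g dA`. -/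
structure BergmanPolynomials (G : Set ℂ) where
  p : ℕ → Polynomial ℂ
  lam : ℕ → ℝ
  lam_pos : ∀ n, 0 < lam n
  deg : ∀ n, (p n).natDegree = n
  lead : ∀ n, (p n).coeff n = (lam n : ℂ)
  ortho : ∀ m n, (∫ z in G, (p m).eval z * (starRingEnd ℂ) ((p n).eval z)) =
    if m = n then (1 : ℂ) else 0

/-! With `β = 1 - ω/2 ∈ [0, 1)`, the elementary bound `e^{-x} ≤ x^{-β}` gives
`e^{-k s^{1/ω}} s^{1/ω-2} ≤ k^{ω/2-1} s^{-3/2}`, so the inner integral is at most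
`2 k^{ω/2-1} r^{-1/2}`. The outer integrand is then bounded by the constant `4 k^{ω-2}`, and
integrating over an interval of length `k^{-ω}` gives `4 / k²`. -/

theorem Real.rpow_le_one_add {x β : ℝ} (hx : 0 ≤ x) (hβ0 : 0 ≤ β) (hβ1 : β ≤ 1) :
    x ^ β ≤ 1 + x := by
  rcases le_total x 1 with hx1 | hx1
  · linarith [Real.rpow_le_one hx hx1 hβ0]
  · linarith [Real.rpow_le_self_of_one_le hx1 hβ1]

theorem Real.exp_neg_le_rpow_neg {x β : ℝ} (hx : 0 < x) (hβ0 : 0 ≤ β) (hβ1 : β ≤ 1) :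
    Real.exp (-x) ≤ x ^ (-β) := by
  rw [Real.exp_neg, Real.rpow_neg hx.le]
  refine inv_anti₀ (by positivity) ?_
  linarith [Real.rpow_le_one_add hx.le hβ0 hβ1, Real.add_one_le_exp x]

theorem exp_neg_mul_rpow_mul_rpow_le {k ω s : ℝ} (hk : 0 < k) (hω : 0 < ω) (hω2 : ω ≤ 2)
    (hs : 0 < s) :
    Real.exp (-k * s ^ (1 / ω)) * s ^ (1 / ω - 2) ≤ k ^ (ω / 2 - 1) * s ^ (-3 / 2 : ℝ) := by
  have hexp : Real.exp (-k * s ^ (1 / ω)) ≤ (k * s ^ (1 / ω)) ^ (-(1 - ω / 2)) := by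
    rw [neg_mul]
    exact Real.exp_neg_le_rpow_neg (by positivity) (by linarith) (by linarith)
  have hpow : (k * s ^ (1 / ω)) ^ (-(1 - ω / 2)) * s ^ (1 / ω - 2)
      = k ^ (ω / 2 - 1) * s ^ (-3 / 2 : ℝ) := by
    rw [Real.mul_rpow hk.le (by positivity), ← Real.rpow_mul hs.le, mul_assoc,
      ← Real.rpow_add hs]
    congr 2
    · ring
    · field_simp
      ring
  calc _ ≤ (k * s ^ (1 / ω)) ^ (-(1 - ω / 2)) * s ^ (1 / ω - 2) := by gcongr
    _ = _ := hpow

theorem integral_Ioi_exp_neg_mul_rpow_mul_rpow_le {k ω r : ℝ} (hk : 0 < k) (hω : 0 < ω)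
    (hω2 : ω ≤ 2) (hr : 0 < r) :
    ∫ s in Ioi r, Real.exp (-k * s ^ (1 / ω)) * s ^ (1 / ω - 2)
      ≤ 2 * k ^ (ω / 2 - 1) * r ^ (-1 / 2 : ℝ) := by
  have hmaj : IntegrableOn (fun s : ℝ ↦ k ^ (ω / 2 - 1) * s ^ (-3 / 2 : ℝ)) (Ioi r) :=
    (integrableOn_Ioi_rpow_of_lt (by norm_num) hr).const_mul _
  calc _ ≤ ∫ s in Ioi r, k ^ (ω / 2 - 1) * s ^ (-3 / 2 : ℝ) := by
        refine integral_mono_of_nonneg ?_ hmaj ?_ <;>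
          filter_upwards [ae_restrict_mem measurableSet_Ioi] with s hs
        · exact mul_nonneg (Real.exp_nonneg _) (Real.rpow_nonneg (hr.trans hs).le _)
        · exact exp_neg_mul_rpow_mul_rpow_le hk hω hω2 (hr.trans hs)
    _ = _ := by
        rw [integral_const_mul, integral_Ioi_rpow_of_lt (by norm_num) hr]
        norm_num
        ring

theorem sq_integral_Ioi_exp_neg_mul_rpow_mul_rpow_mul_le {k ω r : ℝ} (hk : 0 < k) (hω : 0 < ω)
    (hω2 : ω ≤ 2) (hr : 0 < r) :
    (∫ s in Ioi r, Real.exp (-k * s ^ (1 / ω)) * s ^ (1 / ω - 2)) ^ 2 * r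
      ≤ 4 * k ^ (ω - 2) := by
  have hJ0 : 0 ≤ ∫ s in Ioi r, Real.exp (-k * s ^ (1 / ω)) * s ^ (1 / ω - 2) :=
    setIntegral_nonneg measurableSet_Ioi fun s hs ↦
      mul_nonneg (Real.exp_nonneg _) (Real.rpow_nonneg (hr.trans hs).le _)
  calc _ ≤ (2 * k ^ (ω / 2 - 1) * r ^ (-1 / 2 : ℝ)) ^ 2 * r := by
        gcongr
        exact integral_Ioi_exp_neg_mul_rpow_mul_rpow_le hk hω hω2 hr
    _ = 4 * k ^ (ω - 2) := by
        have hk2 : (k ^ (ω / 2 - 1)) ^ 2 = k ^ (ω - 2) := by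
          rw [← Real.rpow_mul_natCast hk.le]
          ring_nf
        have hr2 : (r ^ (-1 / 2 : ℝ)) ^ 2 * r = 1 := by
          rw [← Real.rpow_mul_natCast hr.le, ← Real.rpow_add_one hr.ne']
          norm_num
        rw [mul_pow, mul_pow, hk2, mul_assoc, hr2]
        ring

/-- **Lemma 5.1.** For `ω ∈ (0,2]` and `k ∈ ℕ`, `k ≥ 1`, with `δ = k^(-ω)`,
the integral `I(ω,k) = ∫₀^δ (∫_r^∞ e^(-k s^(1/ω)) s^(1/ω-2) ds)² r dr`
satisfies `I(ω,k) ≤ c/k²` with `c` depending only on `ω`. -/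
theorem integral_estimate
    (ω : ℝ) (hω : 0 < ω) (hω2 : ω ≤ 2) :
    ∃ c : ℝ, 0 < c ∧ ∀ k : ℕ, 1 ≤ k →
      (∫ r in Set.Ioo (0 : ℝ) ((k : ℝ) ^ (-ω)),
          (∫ s in Set.Ioi r, Real.exp (-(k : ℝ) * s ^ (1 / ω)) * s ^ (1 / ω - 2)) ^ 2 * r)
        ≤ c / (k : ℝ) ^ 2 := by
  refine ⟨4, by norm_num, fun k hk ↦ ?_⟩
  have hk0 : (0 : ℝ) < k := by exact_mod_cast hk
  calc _ ≤ ∫ _ in Ioo (0 : ℝ) ((k : ℝ) ^ (-ω)), 4 * (k : ℝ) ^ (ω - 2) := by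
        refine integral_mono_of_nonneg ?_ (integrableOn_const measure_Ioo_lt_top.ne) ?_ <;>
          filter_upwards [ae_restrict_mem measurableSet_Ioo] with r hr
        · exact mul_nonneg (sq_nonneg _) hr.1.le
        · exact sq_integral_Ioi_exp_neg_mul_rpow_mul_rpow_mul_le hk0 hω hω2 hr.1
    _ = 4 / (k : ℝ) ^ 2 := by
        rw [setIntegral_const, Real.volume_real_Ioo_of_le (by positivity), sub_zero, smul_eq_mul,
          mul_left_comm, ← Real.rpow_add hk0, show -ω + (ω - 2) = -2 by ring,
          Real.rpow_neg hk0.le]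
        norm_cast
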